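/- Let X, Y be symmetric d×d real matrices, n > 0 and κ ≥ 0 such that ⟨Xq, q⟩ − ⟨Y q̃, q̃⟩ ≤ 3n|q − q̃|² + κ(|q|² + |q̃|²) for all q, q̃ ∈ ℝ^d, and let σ₁, σ₂ ∈ ℝ^{d×d}. Then Tr(σ₁σ₁ᵀ X) − Tr(σ₂σ₂ᵀ Y) ≤ 3n‖σ₁ − σ₂‖² + κ(‖σ₁‖² + ‖σ₂‖²), where ‖·‖ is the Frobenius norm. In particular, if σ is Lipschitz in the space variable with constant C, i.e. ‖σ(t,x) − σ(t,y)‖ ≤ C|x − y|, then Tr((σσᵀ)(t,x) X) − Tr((σσᵀ)(t,y) Y) ≤ 3C²n|x − y|² + κ(‖σ(t,x)‖² + ‖σ(t,y)‖²). -/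

import Mathlib

/-! Writing `Tr(σσᵀX) = ∑ⱼ ⟨X σeⱼ, σeⱼ⟩` and `‖σ‖² = ∑ⱼ |σeⱼ|²`, the trace estimate is the sum over
`j` of the quadratic-form hypothesis applied to the columns `q = σ₁eⱼ`, `q̃ = σ₂eⱼ`. The Lipschitz
case then only needs `‖σ(t,x) − σ(t,y)‖² ≤ C²|x − y|²`. -/

open Matrix

noncomputable section

/-- Euclidean norm on `Fin d → ℝ`. -/
def eunorm {d : ℕ} (v : Fin d → ℝ) : ℝ := Real.sqrt (∑ i, (v i)^2)

/-- Squared Frobenius norm of a matrix. -/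
def frobSq {d : ℕ} (M : Matrix (Fin d) (Fin d) ℝ) : ℝ := ∑ i, ∑ j, (M i j)^2

theorem Matrix.trace_mul_transpose_mul_eq_sum_cols {m n R : Type*} [Fintype m] [Fintype n]
    [CommSemiring R] (σ : Matrix n m R) (X : Matrix n n R) :
    trace (σ * σᵀ * X) = ∑ j, (X *ᵥ fun i => σ i j) ⬝ᵥ fun i => σ i j := by
  rw [Matrix.mul_assoc, trace_mul_comm]
  simp only [trace, diag, mul_apply, transpose_apply, dotProduct, mulVec, Finset.sum_mul]
  refine Finset.sum_congr rfl fun j _ => Finset.sum_comm.trans ?_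
  simp only [mul_comm, mul_left_comm]

theorem frobSq_eq_sum_cols {d : ℕ} (M : Matrix (Fin d) (Fin d) ℝ) :
    frobSq M = ∑ j, ∑ i, (M i j) ^ 2 :=
  Finset.sum_comm

theorem trace_sub_trace_le_of_quadratic_form_le {d : ℕ} (X Y : Matrix (Fin d) (Fin d) ℝ) (a κ : ℝ)
    (hq : ∀ q q' : Fin d → ℝ,
      dotProduct (X.mulVec q) q - dotProduct (Y.mulVec q') q'
        ≤ a * (∑ i, (q i - q' i) ^ 2) + κ * ((∑ i, (q i) ^ 2) + ∑ i, (q' i) ^ 2))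
    (σ₁ σ₂ : Matrix (Fin d) (Fin d) ℝ) :
    trace (σ₁ * σ₁ᵀ * X) - trace (σ₂ * σ₂ᵀ * Y)
      ≤ a * frobSq (σ₁ - σ₂) + κ * (frobSq σ₁ + frobSq σ₂) := by
  rw [trace_mul_transpose_mul_eq_sum_cols, trace_mul_transpose_mul_eq_sum_cols,
    ← Finset.sum_sub_distrib]
  calc _ ≤ ∑ j, (a * ∑ i, (σ₁ i j - σ₂ i j) ^ 2
          + κ * ((∑ i, (σ₁ i j) ^ 2) + ∑ i, (σ₂ i j) ^ 2)) :=
        Finset.sum_le_sum fun j _ => hq (fun i => σ₁ i j) (fun i => σ₂ i j)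
    _ = a * frobSq (σ₁ - σ₂) + κ * (frobSq σ₁ + frobSq σ₂) := by
        simp only [frobSq_eq_sum_cols, Matrix.sub_apply, Finset.sum_add_distrib, Finset.mul_sum,
          mul_add]

theorem trace_estimate_from_quadratic_forms_general {d : ℕ}
    (X Y : Matrix (Fin d) (Fin d) ℝ) (n κ : ℝ)
    (hn : 0 < n)
    (hq : ∀ q q' : Fin d → ℝ,
      dotProduct (X.mulVec q) q - dotProduct (Y.mulVec q') q'
        ≤ 3 * n * (∑ i, (q i - q' i) ^ 2)
          + κ * ((∑ i, (q i) ^ 2) + ∑ i, (q' i) ^ 2)) :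
    (∀ σ₁ σ₂ : Matrix (Fin d) (Fin d) ℝ,
      Matrix.trace (σ₁ * σ₁ᵀ * X) - Matrix.trace (σ₂ * σ₂ᵀ * Y)
        ≤ 3 * n * frobSq (σ₁ - σ₂) + κ * (frobSq σ₁ + frobSq σ₂)) ∧
    (∀ (C : ℝ), 0 ≤ C →
      ∀ (σ : ℝ → (Fin d → ℝ) → Matrix (Fin d) (Fin d) ℝ),
      (∀ (t : ℝ) (x y : Fin d → ℝ),
        Real.sqrt (frobSq (σ t x - σ t y)) ≤ C * eunorm (x - y)) →
      ∀ (t : ℝ) (x y : Fin d → ℝ),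
        Matrix.trace (σ t x * (σ t x)ᵀ * X) - Matrix.trace (σ t y * (σ t y)ᵀ * Y)
          ≤ 3 * C^2 * n * (eunorm (x - y))^2
            + κ * (frobSq (σ t x) + frobSq (σ t y))) := by
  have htrace := trace_sub_trace_le_of_quadratic_form_le X Y (3 * n) κ hq
  refine ⟨htrace, fun C _ σ hLip t x y => ?_⟩
  have hfrob : frobSq (σ t x - σ t y) ≤ C ^ 2 * eunorm (x - y) ^ 2 := by
    rw [← mul_pow]
    exact (Real.sqrt_le_iff.mp (hLip t x y)).2
  calc _ ≤ 3 * n * frobSq (σ t x - σ t y) + κ * (frobSq (σ t x) + frobSq (σ t y)) := htrace _ _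
    _ ≤ 3 * n * (C ^ 2 * eunorm (x - y) ^ 2) + κ * (frobSq (σ t x) + frobSq (σ t y)) := by
        gcongr
    _ = 3 * C ^ 2 * n * eunorm (x - y) ^ 2 + κ * (frobSq (σ t x) + frobSq (σ t y)) := by ring

/-- If symmetric matrices `X, Y` satisfy
`⟨Xq, q⟩ − ⟨Yq̃, q̃⟩ ≤ 3n|q − q̃|² + κ(|q|² + |q̃|²)` for all `q, q̃`, then for
any matrices `σ₁, σ₂`:
`Tr(σ₁σ₁ᵀX) − Tr(σ₂σ₂ᵀY) ≤ 3n‖σ₁ − σ₂‖² + κ(‖σ₁‖² + ‖σ₂‖²)` (Frobenius norms).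
In particular, if `σ(t,·)` is `C`-Lipschitz, then
`Tr((σσᵀ)(t,x)X) − Tr((σσᵀ)(t,y)Y) ≤ 3C²n|x−y|² + κ(‖σ(t,x)‖² + ‖σ(t,y)‖²)`. -/
theorem trace_estimate_from_quadratic_forms {d : ℕ}
    (X Y : Matrix (Fin d) (Fin d) ℝ) (n κ : ℝ)
    (hX : X.IsSymm) (hY : Y.IsSymm) (hn : 0 < n) (hκ : 0 ≤ κ)
    (hq : ∀ q q' : Fin d → ℝ,
      dotProduct (X.mulVec q) q - dotProduct (Y.mulVec q') q'
        ≤ 3 * n * (∑ i, (q i - q' i) ^ 2)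
          + κ * ((∑ i, (q i) ^ 2) + ∑ i, (q' i) ^ 2)) :
    (∀ σ₁ σ₂ : Matrix (Fin d) (Fin d) ℝ,
      Matrix.trace (σ₁ * σ₁ᵀ * X) - Matrix.trace (σ₂ * σ₂ᵀ * Y)
        ≤ 3 * n * frobSq (σ₁ - σ₂) + κ * (frobSq σ₁ + frobSq σ₂)) ∧
    (∀ (C : ℝ), 0 ≤ C →
      ∀ (σ : ℝ → (Fin d → ℝ) → Matrix (Fin d) (Fin d) ℝ),
      (∀ (t : ℝ) (x y : Fin d → ℝ),
        Real.sqrt (frobSq (σ t x - σ t y)) ≤ C * eunorm (x - y)) →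
      ∀ (t : ℝ) (x y : Fin d → ℝ),
        Matrix.trace (σ t x * (σ t x)ᵀ * X) - Matrix.trace (σ t y * (σ t y)ᵀ * Y)
          ≤ 3 * C^2 * n * (eunorm (x - y))^2
            + κ * (frobSq (σ t x) + frobSq (σ t y))) :=
  trace_estimate_from_quadratic_forms_general X Y n κ hn hq
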